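/- arXiv:1709.09416 — 2 statements merged into one kernel-verified Lean document; each statement's English description precedes it below -/
import Mathlib

section
/- Let W be a pointy potential on ℝ^d with constants λ ∈ ℝ and w_∞ ≥ 0, let ρ^{ini} be a probability measure on ℝ^d with finite second moment, and assume the strict 1/2-CFL condition w_∞ Σ_{i=1}^d Δt/Δx_i < 1/2. Let ρ_J^0 := ρ^{ini}(C_J) and let (ρ_J^n) be produced by the upwind scheme. Then the center of mass is conserved: for all n ∈ ℕ, Σ_{J∈ℤ^d} x_J ρ_J^n = Σ_{J∈ℤ^d} x_J ρ_J^0 (all these sums converging absolutely). -/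
open MeasureTheory Real Set
open scoped RealInnerProductSpace ENNReal

noncomputable section

/-- `ℝ^d` with the Euclidean structure. -/
abbrev Euc (d : ℕ) := EuclideanSpace ℝ (Fin d)

open Classical in
/-- `∇̂W`: the gradient of `W` away from `0`, and `0` at `0`. -/
def hatGrad {d : ℕ} (W : Euc d → ℝ) (x : Euc d) : Euc d :=
  if x = 0 then 0 else gradient W x

/-- Positive part `r⁺ = max(r,0)`. -/
def pos (r : ℝ) : ℝ := max r 0

/-- Negative part `r⁻ = max(-r,0)`. -/
def neg (r : ℝ) : ℝ := max (-r) 0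

/-- The node `x_J = (J_1 Δx_1, …, J_d Δx_d)`. -/
def node {d : ℕ} (Δx : Fin d → ℝ) (J : Fin d → ℤ) : Euc d :=
  (EuclideanSpace.equiv (Fin d) ℝ).symm (fun i => (J i : ℝ) * Δx i)

/-- The cell `C_J = Π_i [(J_i - 1/2)Δx_i, (J_i + 1/2)Δx_i)`. -/
def cell {d : ℕ} (Δx : Fin d → ℝ) (J : Fin d → ℤ) : Set (Euc d) :=
  {y | ∀ i, ((J i : ℝ) - 1/2) * Δx i ≤ y i ∧ y i < ((J i : ℝ) + 1/2) * Δx i}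

/-- The discrete velocities `(a_i)_J = -Σ_K ρ_K (∇̂W)_i (x_J - x_K)`. -/
def discVel {d : ℕ} (W : Euc d → ℝ) (Δx : Fin d → ℝ) (ρ : (Fin d → ℤ) → ℝ)
    (J : Fin d → ℤ) (i : Fin d) : ℝ :=
  -∑' K : Fin d → ℤ, ρ K * hatGrad W (node Δx J - node Δx K) i

/-- One step of the upwind scheme. -/
def upwindStep {d : ℕ} (Δx : Fin d → ℝ) (Δt : ℝ) (a : (Fin d → ℤ) → Fin d → ℝ)
    (ρ : (Fin d → ℤ) → ℝ) (J : Fin d → ℤ) : ℝ :=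
  ρ J - ∑ i : Fin d, (Δt / Δx i) *
    (pos (a J i) * ρ J - neg (a (J + Pi.single i 1) i) * ρ (J + Pi.single i 1)
      - pos (a (J - Pi.single i 1) i) * ρ (J - Pi.single i 1) + neg (a J i) * ρ J)

/-! The upwind scheme is in conservation form: with the interface flux
`F_i(J) = (a_i)_J⁺ ρ_J - (a_i)_{J+e_i}⁻ ρ_{J+e_i}`, one step reads
`ρ'_J = ρ_J - Σ_i (Δt/Δx_i) (F_i(J) - F_i(J-e_i))`. Pairing with `x_J` and shifting the index, the
first moment changes by `-Δt Σ_i e_i Σ_J F_i(J) = -Δt Σ_i e_i Σ_J (a_i)_J ρ_J`, and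
`Σ_J (a_i)_J ρ_J = -Σ_{J,K} ρ_J ρ_K (∇̂W)_i(x_J - x_K)` vanishes because `∇̂W` is odd (`W` being even).
The velocities are bounded by `w_∞ Σ_K |ρ_K|`, so the absolute summability of `ρ_J` and `ρ_J x_J`
propagates from each step to the next, starting from the finite first moment of `ρ^{ini}`. -/

lemma node_add {d : ℕ} (Δx : Fin d → ℝ) (J K : Fin d → ℤ) :
    node Δx (J + K) = node Δx J + node Δx K := by
  ext i
  simp [node, add_mul]

lemma abs_pos_le_abs (r : ℝ) : |pos r| ≤ |r| := by
  change |r⁺| ≤ |r|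
  rw [abs_of_nonneg (posPart_nonneg r), ← posPart_add_negPart]
  exact le_add_of_nonneg_right (negPart_nonneg r)

lemma abs_neg_le_abs (r : ℝ) : |neg r| ≤ |r| := by
  change |r⁻| ≤ |r|
  rw [abs_of_nonneg (negPart_nonneg r), ← posPart_add_negPart]
  exact le_add_of_nonneg_left (posPart_nonneg r)

lemma EuclideanSpace.norm_le_of_abs_apply_le {ι : Type*} [Fintype ι] {v : EuclideanSpace ℝ ι}
    {c : ι → ℝ} (h : ∀ i, |v i| ≤ c i) : ‖v‖ ≤ √(∑ i, c i ^ 2) := by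
  rw [EuclideanSpace.norm_eq]
  gcongr with i
  exact h i

section Gradient

variable {d : ℕ} {W : Euc d → ℝ}

theorem gradient_neg_of_even (hW : ∀ x, W (-x) = W x) (x : Euc d) :
    gradient W (-x) = -gradient W x := by
  have hWneg : W ∘ ContinuousLinearEquiv.neg ℝ = W := funext hW
  have hfderiv : fderiv ℝ W (-x) = -fderiv ℝ W x := by
    rw [← hWneg, ContinuousLinearEquiv.comp_right_fderiv, hWneg]
    ext v
    simp
  rw [gradient, hfderiv, map_neg, gradient]

lemma hatGrad_neg (hW : ∀ x, W (-x) = W x) (x : Euc d) : hatGrad W (-x) = -hatGrad W x := by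
  by_cases hx : x = 0
  · simp [hatGrad, hx]
  · simp [hatGrad, hx, gradient_neg_of_even hW]

lemma norm_hatGrad_le {winf : ℝ} (hwinf : 0 ≤ winf)
    (hbound : ∀ x : Euc d, x ≠ 0 → ‖gradient W x‖ ≤ winf) (x : Euc d) : ‖hatGrad W x‖ ≤ winf := by
  by_cases hx : x = 0
  · simpa [hatGrad, hx] using hwinf
  · simpa [hatGrad, hx] using hbound x hx

end Gradient

theorem tsum_mul_tsum_mul_eq_zero_of_antisymm {ι : Type*} {ρ : ι → ℝ} (hρ : Summable ρ)
    {g : ι → ι → ℝ} {M : ℝ} (hg : ∀ J K, |g J K| ≤ M) (hanti : ∀ J K, g K J = -g J K) :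
    ∑' J, ρ J * ∑' K, ρ K * g J K = 0 := by
  have hφ : Summable fun p : ι × ι => ρ p.1 * (ρ p.2 * g p.1 p.2) := by
    refine ((summable_mul_of_summable_norm hρ.norm hρ.norm).norm.mul_left M).of_norm_bounded
      fun p => ?_
    rw [← mul_assoc, norm_mul, mul_comm M]
    exact mul_le_mul_of_nonneg_left ((Real.norm_eq_abs _).trans_le (hg _ _)) (norm_nonneg _)
  have hswap : ∑' p : ι × ι, ρ p.1 * (ρ p.2 * g p.1 p.2)
      = -∑' p : ι × ι, ρ p.1 * (ρ p.2 * g p.1 p.2) := by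
    conv_lhs => rw [← (Equiv.prodComm ι ι).tsum_eq]
    rw [← tsum_neg]
    congr 1
    funext p
    rw [Equiv.prodComm_apply, Prod.fst_swap, Prod.snd_swap, hanti]
    ring
  calc ∑' J, ρ J * ∑' K, ρ K * g J K = ∑' p : ι × ι, ρ p.1 * (ρ p.2 * g p.1 p.2) := by
        simp_rw [← tsum_mul_left]
        exact (hφ.tsum_prod' hφ.prod_factor).symm
    _ = 0 := by linarith

section Velocity

variable {d : ℕ} {W : Euc d → ℝ} {winf : ℝ} (Δx : Fin d → ℝ) {ρ : (Fin d → ℤ) → ℝ}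

lemma abs_discVel_le (hgrad : ∀ x, ‖hatGrad W x‖ ≤ winf) (hρ : Summable ρ) (J : Fin d → ℤ)
    (i : Fin d) : |discVel W Δx ρ J i| ≤ winf * ∑' K, |ρ K| := by
  rw [discVel, abs_neg, ← Real.norm_eq_abs, mul_comm, ← tsum_mul_right]
  refine tsum_of_norm_bounded (hρ.abs.mul_right winf).hasSum fun K => ?_
  rw [Real.norm_eq_abs, abs_mul]
  exact mul_le_mul_of_nonneg_left ((PiLp.norm_apply_le _ i).trans (hgrad _)) (abs_nonneg _)

lemma tsum_discVel_mul_eq_zero (hW : ∀ x, W (-x) = W x) (hgrad : ∀ x, ‖hatGrad W x‖ ≤ winf)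
    (hρ : Summable ρ) (i : Fin d) : ∑' J, discVel W Δx ρ J i * ρ J = 0 := by
  simp_rw [discVel, neg_mul, tsum_neg, mul_comm _ (ρ _)]
  rw [neg_eq_zero]
  refine tsum_mul_tsum_mul_eq_zero_of_antisymm hρ
    (fun J K => (PiLp.norm_apply_le _ i).trans (hgrad _)) fun J K => ?_
  rw [← neg_sub, hatGrad_neg hW, PiLp.neg_apply]

end Velocity

section Upwind

variable {d : ℕ} {Δx : Fin d → ℝ}

def MomentSummable (Δx : Fin d → ℝ) (f : (Fin d → ℤ) → ℝ) : Prop :=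
  Summable f ∧ Summable fun J => f J • node Δx J

namespace MomentSummable

variable {f g : (Fin d → ℤ) → ℝ}

lemma sub (hf : MomentSummable Δx f) (hg : MomentSummable Δx g) :
    MomentSummable Δx fun J => f J - g J :=
  ⟨hf.1.sub hg.1, by simpa only [sub_smul] using hf.2.sub hg.2⟩

lemma const_mul (hf : MomentSummable Δx f) (c : ℝ) : MomentSummable Δx fun J => c * f J :=
  ⟨hf.1.mul_left c, by simpa only [mul_smul] using hf.2.const_smul c⟩

lemma finsetSum {α : Type*} {s : Finset α} {f : α → (Fin d → ℤ) → ℝ}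
    (hf : ∀ i ∈ s, MomentSummable Δx (f i)) : MomentSummable Δx fun J => ∑ i ∈ s, f i J :=
  ⟨summable_sum fun i hi => (hf i hi).1,
    by simpa only [Finset.sum_smul] using summable_sum fun i hi => (hf i hi).2⟩

lemma comp_add_right (hf : MomentSummable Δx f) (v : Fin d → ℤ) :
    MomentSummable Δx fun J => f (J + v) := by
  have hf' : Summable fun J => f (J + v) := hf.1.comp_injective (add_left_injective v)
  have hshift : Summable fun J => f (J + v) • node Δx (J + v) :=
    hf.2.comp_injective (add_left_injective v)
  refine ⟨hf', (hshift.sub (hf'.smul_const (node Δx v))).congr fun J => ?_⟩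
  rw [node_add, smul_add, add_sub_cancel_right]

lemma comp_sub_right (hf : MomentSummable Δx f) (v : Fin d → ℤ) :
    MomentSummable Δx fun J => f (J - v) := by
  simpa only [sub_eq_add_neg] using hf.comp_add_right (-v)

lemma mul_of_abs_le {c : (Fin d → ℤ) → ℝ} {M : ℝ} (hc : ∀ J, |c J| ≤ M)
    (hf : MomentSummable Δx f) : MomentSummable Δx fun J => c J * f J := by
  have hbound : ∀ {E : Type} [SeminormedAddCommGroup E] [NormedSpace ℝ E] (u : (Fin d → ℤ) → E)
      (J : Fin d → ℤ), ‖(c J * f J) • u J‖ ≤ M * ‖f J • u J‖ := fun u J => by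
    rw [mul_smul, norm_smul, Real.norm_eq_abs]
    exact mul_le_mul_of_nonneg_right (hc J) (norm_nonneg _)
  refine ⟨(hf.1.norm.mul_left M).of_norm_bounded fun J => ?_,
    ((summable_norm_iff.2 hf.2).mul_left M).of_norm_bounded (hbound _)⟩
  simpa only [smul_eq_mul, mul_one] using hbound (fun _ => (1 : ℝ)) J

end MomentSummable

lemma tsum_sub_comp_sub_smul_node {F : (Fin d → ℤ) → ℝ} (hF : MomentSummable Δx F)
    (v : Fin d → ℤ) :
    ∑' J, (F J - F (J - v)) • node Δx J = -(∑' J, F J) • node Δx v := by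
  have hshift : ∑' J, F (J - v) • node Δx J = ∑' J, F J • node Δx (J + v) := by
    simpa only [Equiv.subRight_apply, sub_add_cancel] using
      (Equiv.subRight v).tsum_eq fun J => F J • node Δx (J + v)
  simp_rw [sub_smul]
  rw [hF.2.tsum_sub (hF.comp_sub_right v).2, hshift]
  simp_rw [node_add, smul_add]
  rw [hF.2.tsum_add (hF.1.smul_const _), hF.1.tsum_smul_const, neg_smul]
  abel

variable {a : (Fin d → ℤ) → Fin d → ℝ} {ρ : (Fin d → ℤ) → ℝ}

def interfaceFlux (a : (Fin d → ℤ) → Fin d → ℝ) (ρ : (Fin d → ℤ) → ℝ) (i : Fin d)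
    (J : Fin d → ℤ) : ℝ :=
  pos (a J i) * ρ J - neg (a (J + Pi.single i 1) i) * ρ (J + Pi.single i 1)

lemma upwindStep_eq_sub_interfaceFlux (Δt : ℝ) (J : Fin d → ℤ) :
    upwindStep Δx Δt a ρ J = ρ J - ∑ i, Δt / Δx i *
      (interfaceFlux a ρ i J - interfaceFlux a ρ i (J - Pi.single i 1)) := by
  simp only [upwindStep, interfaceFlux, sub_add_cancel]
  congr 1
  refine Finset.sum_congr rfl fun i _ => ?_
  ring

section BoundedVelocity

variable {M : ℝ} (ha : ∀ J i, |a J i| ≤ M) (hρ : MomentSummable Δx ρ)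
include ha hρ

lemma MomentSummable.interfaceFlux (i : Fin d) : MomentSummable Δx (interfaceFlux a ρ i) :=
  (hρ.mul_of_abs_le fun J => (abs_pos_le_abs _).trans (ha J i)).sub
    ((hρ.mul_of_abs_le fun J => (abs_neg_le_abs _).trans (ha J i)).comp_add_right _)

lemma tsum_interfaceFlux (i : Fin d) : ∑' J, interfaceFlux a ρ i J = ∑' J, a J i * ρ J := by
  have hpos := hρ.mul_of_abs_le fun J => (abs_pos_le_abs _).trans (ha J i)
  have hneg := hρ.mul_of_abs_le fun J => (abs_neg_le_abs _).trans (ha J i)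
  have hshift : ∑' J : Fin d → ℤ, neg (a (J + Pi.single i 1) i) * ρ (J + Pi.single i 1)
      = ∑' J, neg (a J i) * ρ J :=
    (Equiv.addRight _).tsum_eq fun J => neg (a J i) * ρ J
  simp only [interfaceFlux]
  rw [hpos.1.tsum_sub (hneg.comp_add_right _).1, hshift, ← hpos.1.tsum_sub hneg.1]
  refine tsum_congr fun J => ?_
  rw [← sub_mul]
  exact congrArg (· * ρ J) (posPart_sub_negPart (a J i))

lemma MomentSummable.upwindStep (Δt : ℝ) : MomentSummable Δx (upwindStep Δx Δt a ρ) := by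
  simp_rw [funext (upwindStep_eq_sub_interfaceFlux (a := a) (ρ := ρ) Δt)]
  exact hρ.sub (MomentSummable.finsetSum fun i _ =>
    ((hρ.interfaceFlux ha i).sub ((hρ.interfaceFlux ha i).comp_sub_right _)).const_mul _)

theorem tsum_upwindStep_smul_node (Δt : ℝ) (hcom : ∀ i, ∑' J, a J i * ρ J = 0) :
    ∑' J, upwindStep Δx Δt a ρ J • node Δx J = ∑' J, ρ J • node Δx J := by
  have hF := hρ.interfaceFlux ha
  have hjump : ∀ i, MomentSummable Δx fun J =>
      interfaceFlux a ρ i J - interfaceFlux a ρ i (J - Pi.single i 1) :=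
    fun i => (hF i).sub ((hF i).comp_sub_right _)
  calc ∑' J, upwindStep Δx Δt a ρ J • node Δx J
      = ∑' J, (ρ J • node Δx J - ∑ i, (Δt / Δx i) •
          ((interfaceFlux a ρ i J - interfaceFlux a ρ i (J - Pi.single i 1)) • node Δx J)) := by
        refine tsum_congr fun J => ?_
        rw [upwindStep_eq_sub_interfaceFlux, sub_smul, Finset.sum_smul]
        simp_rw [mul_smul]
    _ = ∑' J, ρ J • node Δx J - ∑ i, (Δt / Δx i) •
          ∑' J, (interfaceFlux a ρ i J - interfaceFlux a ρ i (J - Pi.single i 1)) • node Δx J := by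
        rw [hρ.2.tsum_sub (summable_sum fun i _ => (hjump i).2.const_smul _),
          Summable.tsum_finsetSum fun i _ => (hjump i).2.const_smul _]
        simp_rw [tsum_const_smul'']
    _ = ∑' J, ρ J • node Δx J := by
        simp [tsum_sub_comp_sub_smul_node (hF _), tsum_interfaceFlux ha hρ, hcom]

end BoundedVelocity

end Upwind

section Cells

variable {d : ℕ} {Δx : Fin d → ℝ}

lemma measurableSet_cell (Δx : Fin d → ℝ) (J : Fin d → ℤ) : MeasurableSet (cell Δx J) := by
  simp only [cell, Set.ofPred_forall, Set.ofPred_and]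
  exact MeasurableSet.iInter fun i =>
    (measurableSet_le measurable_const (by fun_prop)).inter
      (measurableSet_lt (by fun_prop) measurable_const)

lemma floor_eq_of_mem_cell (hΔx : ∀ i, 0 < Δx i) {J : Fin d → ℤ} {y : Euc d}
    (hy : y ∈ cell Δx J) (i : Fin d) : ⌊y i / Δx i + 1 / 2⌋ = J i := by
  obtain ⟨hlow, hupp⟩ := hy i
  rw [Int.floor_eq_iff]
  constructor
  · linarith [(le_div_iff₀ (hΔx i)).2 hlow]
  · linarith [(div_lt_iff₀ (hΔx i)).2 hupp]

lemma pairwise_disjoint_cell (hΔx : ∀ i, 0 < Δx i) : Pairwise (Function.onFun Disjoint (cell Δx)) :=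
  fun _ _ hJK => Set.disjoint_left.2 fun _ hJ hK => hJK <| funext fun i =>
    (floor_eq_of_mem_cell hΔx hJ i).symm.trans (floor_eq_of_mem_cell hΔx hK i)

lemma norm_node_le_of_mem_cell {J : Fin d → ℤ} {y : Euc d}
    (hy : y ∈ cell Δx J) : ‖node Δx J‖ ≤ ‖y‖ + √(∑ i, Δx i ^ 2) := by
  refine (norm_le_norm_add_norm_sub' _ y).trans ((add_le_add_iff_left _).2 ?_)
  refine EuclideanSpace.norm_le_of_abs_apply_le fun i => ?_
  obtain ⟨hlow, hupp⟩ := hy i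
  rw [PiLp.sub_apply, abs_le]
  simp only [node, EuclideanSpace.equiv, PiLp.continuousLinearEquiv_symm_apply]
  constructor <;> nlinarith

lemma MomentSummable.measure_cell (hΔx : ∀ i, 0 < Δx i) (μ : Measure (Euc d))
    [IsFiniteMeasure μ] (hμ : Integrable (fun x => ‖x‖) μ) :
    MomentSummable Δx fun J => (μ (cell Δx J)).toReal := by
  set R := √(∑ i, Δx i ^ 2)
  have hint : Integrable (fun y => ‖y‖ + R) μ := hμ.add (integrable_const R)
  have hsum : Summable fun J => ∫ y in cell Δx J, (‖y‖ + R) ∂μ :=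
    (hasSum_integral_iUnion (measurableSet_cell Δx) (pairwise_disjoint_cell hΔx)
      hint.integrableOn).summable
  refine ⟨ENNReal.summable_toReal ?_, hsum.of_norm_bounded fun J => ?_⟩
  · rw [← measure_iUnion (pairwise_disjoint_cell hΔx) (measurableSet_cell Δx)]
    exact measure_ne_top _ _
  calc ‖(μ (cell Δx J)).toReal • node Δx J‖ = ∫ _ in cell Δx J, ‖node Δx J‖ ∂μ := by
        rw [setIntegral_const, norm_smul, Real.norm_of_nonneg ENNReal.toReal_nonneg,
          measureReal_def, smul_eq_mul]
    _ ≤ ∫ y in cell Δx J, (‖y‖ + R) ∂μ :=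
        setIntegral_mono_on (integrableOn_const (measure_ne_top _ _)) hint.integrableOn
          (measurableSet_cell Δx J) fun _ hy => norm_node_le_of_mem_cell hy

end Cells

lemma integrable_norm_of_integrable_norm_sq {E : Type*} [NormedAddCommGroup E]
    [MeasurableSpace E] [OpensMeasurableSpace E] [SecondCountableTopology E] {μ : Measure E} [IsFiniteMeasure μ]
    (h : Integrable (fun x => ‖x‖ ^ 2) μ) : Integrable (fun x => ‖x‖) μ :=
  ((memLp_two_iff_integrable_sq_norm aestronglyMeasurable_id).2 h).integrable one_le_two |>.norm

theorem stmt6_general {d : ℕ} (W : Euc d → ℝ) (winf : ℝ) (hwinf : 0 ≤ winf)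
    (hsymm : ∀ x : Euc d, W (-x) = W x)
    (hbound : ∀ x : Euc d, x ≠ 0 → ‖gradient W x‖ ≤ winf)
    (Δx : Fin d → ℝ) (hΔx : ∀ i, 0 < Δx i) (Δt : ℝ)
    (ρini : Measure (Euc d)) [IsProbabilityMeasure ρini]
    (hmom2 : Integrable (fun x : Euc d => ‖x‖ ^ 2) ρini)
    (ρ : ℕ → (Fin d → ℤ) → ℝ)
    (h0 : ∀ J, ρ 0 J = (ρini (cell Δx J)).toReal)
    (hrec : ∀ n, ρ (n + 1) = upwindStep Δx Δt (discVel W Δx (ρ n)) (ρ n)) :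
    ∀ n : ℕ, Summable (fun J : Fin d → ℤ => ρ n J • node Δx J) ∧
      ∑' J : Fin d → ℤ, ρ n J • node Δx J = ∑' J : Fin d → ℤ, ρ 0 J • node Δx J := by
  have hgrad : ∀ x, ‖hatGrad W x‖ ≤ winf := norm_hatGrad_le hwinf hbound
  have hstep : ∀ n, MomentSummable Δx (ρ n) ∧
      ∑' J, ρ n J • node Δx J = ∑' J, ρ 0 J • node Δx J := by
    intro n
    induction n with
    | zero =>
      rw [funext h0]
      exact ⟨.measure_cell hΔx ρini (integrable_norm_of_integrable_norm_sq hmom2), rfl⟩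
    | succ n ih =>
      have hvel := abs_discVel_le Δx hgrad ih.1.1
      have hcom := tsum_discVel_mul_eq_zero Δx hsymm hgrad ih.1.1
      rw [hrec n]
      exact ⟨ih.1.upwindStep hvel Δt, (tsum_upwindStep_smul_node hvel ih.1 Δt hcom).trans ih.2⟩
  exact fun n => ⟨(hstep n).1.2, (hstep n).2⟩

/-- Conservation of the center of mass by the upwind scheme. -/
theorem stmt6 {d : ℕ} (hd : 1 ≤ d) (W : Euc d → ℝ) (lam winf : ℝ) (hwinf : 0 ≤ winf)
    (hsymm : ∀ x : Euc d, W (-x) = W x) (hW0 : W 0 = 0)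
    (hconv : ConvexOn ℝ Set.univ (fun x : Euc d => W x - lam / 2 * ‖x‖ ^ 2))
    (hC1 : ContDiffOn ℝ 1 W {(0 : Euc d)}ᶜ)
    (hbound : ∀ x : Euc d, x ≠ 0 → ‖gradient W x‖ ≤ winf)
    (Δx : Fin d → ℝ) (hΔx : ∀ i, 0 < Δx i) (Δt : ℝ) (hΔt : 0 < Δt)
    (hCFL : winf * ∑ i, Δt / Δx i < 1 / 2)
    (ρini : Measure (Euc d)) [IsProbabilityMeasure ρini]
    (hmom2 : Integrable (fun x : Euc d => ‖x‖ ^ 2) ρini)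
    (ρ : ℕ → (Fin d → ℤ) → ℝ)
    (h0 : ∀ J, ρ 0 J = (ρini (cell Δx J)).toReal)
    (hrec : ∀ n, ρ (n + 1) = upwindStep Δx Δt (discVel W Δx (ρ n)) (ρ n)) :
    ∀ n : ℕ, Summable (fun J : Fin d → ℤ => ρ n J • node Δx J) ∧
      ∑' J : Fin d → ℤ, ρ n J • node Δx J = ∑' J : Fin d → ℤ, ρ 0 J • node Δx J :=
  stmt6_general W winf hwinf hsymm hbound Δx hΔx Δt ρini hmom2 ρ h0 hrec
end
end

section
/- Fix d ≥ 1, mesh steps Δx_1, …, Δx_d > 0, a time step Δt > 0 and w_∞ ≥ 0 satisfying the strict 1/2-CFL condition w_∞ Σ_{i=1}^d Δt/Δx_i < 1/2. Let a ∈ ℝ^d with |⟨a, e_i⟩| ≤ w_∞ for every i, and let J ∈ ℤ^d. Then x_J + Δt a ∈ C_J, and the interpolation weights at the shifted node are: α_J(x_J + Δt a) = 1 − Σ_{i=1}^d (Δt/Δx_i)|a_i|; α_{J+e_i}(x_J + Δt a) = (Δt/Δx_i)(a_i)⁺ and α_{J−e_i}(x_J + Δt a) = (Δt/Δx_i)(a_i)⁻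 for each i; and α_L(x_J + Δt a) = 0 for every other L ∈ ℤ^d. In particular all these weights are nonnegative. -/
open MeasureTheory Real Set
open scoped RealInnerProductSpace ENNReal

noncomputable section

open Classical in
/-- The interpolation weight `α_J(y)`: since the cells `(C_L)` are pairwise disjoint, at most
one of the summands below is nonzero, and this agrees with the case-by-case definition:
`1 - Σ_i |⟨y - x_J, e_i⟩|/Δx_i` if `y ∈ C_J`; `(⟨y - x_{J∓e_i}, e_i⟩)^±/Δx_i` if
`y ∈ C_{J∓e_i}`; and `0` otherwise. -/
def interpWeight {d : ℕ} (Δx : Fin d → ℝ) (J : Fin d → ℤ) (y : Euc d) : ℝ :=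
  (if y ∈ cell Δx J then 1 - ∑ i, |y i - node Δx J i| / Δx i else 0)
    + ∑ i : Fin d,
      ((if y ∈ cell Δx (J - Pi.single i 1) then
          pos (y i - node Δx (J - Pi.single i 1) i) / Δx i else 0)
        + (if y ∈ cell Δx (J + Pi.single i 1) then
            neg (y i - node Δx (J + Pi.single i 1) i) / Δx i else 0))

/- Under the CFL condition every displacement `|Δt a_i|` is smaller than `Δx_i / 2`, so
`x_J + Δt a` lies in `C_J`, and, the cells being disjoint, in no other cell. Hence in
`α_L(x_J + Δt a)` only a summand whose cell is `C_J` survives, which happens exactly for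
`L = J` and `L = J ± e_i`, and these summands are the upwind coefficients. The central one is
nonnegative because `Σ_i (Δt/Δx_i)|a_i| ≤ w_∞ Σ_i Δt/Δx_i < 1/2`. -/

section Lattice

variable {ι : Type*} [DecidableEq ι]

lemma Pi.single_one_inj {i j : ι} : (Pi.single i 1 : ι → ℤ) = Pi.single j 1 ↔ i = j := by
  refine ⟨fun h => ?_, fun h => h ▸ rfl⟩
  by_contra hij
  simpa [hij] using congrFun h i

lemma Pi.single_one_add_single_one_ne_zero (i j : ι) :
    (Pi.single i 1 + Pi.single j 1 : ι → ℤ) ≠ 0 := by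
  intro h
  have := congrFun h i
  simp only [Pi.add_apply, Pi.single_eq_same, Pi.single_apply, Pi.zero_apply] at this
  split_ifs at this <;> omega

variable (J : ι → ℤ) (i j : ι)

lemma add_single_one_sub_single_one_eq_self_iff :
    J + Pi.single i 1 - Pi.single j 1 = J ↔ j = i := by
  simp [add_sub_assoc, sub_eq_zero, Pi.single_one_inj, eq_comm]

lemma sub_single_one_add_single_one_eq_self_iff :
    J - Pi.single i 1 + Pi.single j 1 = J ↔ j = i := by
  simp [sub_add_eq_add_sub, add_sub_assoc, sub_eq_zero, Pi.single_one_inj, eq_comm]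

lemma add_single_one_add_single_one_ne_self : J + Pi.single i 1 + Pi.single j 1 ≠ J := by
  simp [add_assoc, Pi.single_one_add_single_one_ne_zero]

lemma sub_single_one_sub_single_one_ne_self : J - Pi.single i 1 - Pi.single j 1 ≠ J := by
  simp [sub_sub, Pi.single_one_add_single_one_ne_zero]

end Lattice

lemma pos_mul_of_nonneg {t : ℝ} (ht : 0 ≤ t) (r : ℝ) : pos (t * r) = t * pos r := by
  simp only [pos, mul_max_of_nonneg _ _ ht, mul_zero]

lemma neg_mul_of_nonneg {t : ℝ} (ht : 0 ≤ t) (r : ℝ) : neg (t * r) = t * neg r := by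
  simp only [neg, mul_max_of_nonneg _ _ ht, mul_zero, ← mul_neg]

section Cells

variable {d : ℕ} {Δx : Fin d → ℝ}

lemma node_apply (J : Fin d → ℤ) (i : Fin d) : node Δx J i = J i * Δx i := rfl

lemma node_add_mem_cell {v : Euc d} (hv : ∀ i, |v i| < Δx i / 2) (J : Fin d → ℤ) :
    node Δx J + v ∈ cell Δx J := by
  intro i
  obtain ⟨hlo, hhi⟩ := abs_lt.mp (hv i)
  simp only [PiLp.add_apply, node_apply]
  constructor <;> linarith

lemma eq_of_mem_cell_of_mem_cell (hΔx : ∀ i, 0 < Δx i) {y : Euc d} {J K : Fin d → ℤ}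
    (hJ : y ∈ cell Δx J) (hK : y ∈ cell Δx K) : J = K := by
  funext i
  obtain ⟨hJlo, hJhi⟩ := hJ i
  obtain ⟨hKlo, hKhi⟩ := hK i
  have hJK : (J i : ℝ) < K i + 1 :=
    lt_of_mul_lt_mul_right (by linarith : (J i : ℝ) * Δx i < (K i + 1) * Δx i) (hΔx i).le
  have hKJ : (K i : ℝ) < J i + 1 :=
    lt_of_mul_lt_mul_right (by linarith : (K i : ℝ) * Δx i < (J i + 1) * Δx i) (hΔx i).le
  norm_cast at hJK hKJ
  omega

lemma node_add_smul_mem_cell (hΔx : ∀ i, 0 < Δx i) {Δt : ℝ} (hΔt : 0 ≤ Δt) {a : Euc d}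
    (ha : ∑ i, Δt / Δx i * |a i| < 1 / 2) (J : Fin d → ℤ) : node Δx J + Δt • a ∈ cell Δx J := by
  refine node_add_mem_cell (fun i => ?_) J
  have hterm_nonneg : ∀ j, 0 ≤ Δt / Δx j * |a j| :=
    fun j => mul_nonneg (div_nonneg hΔt (hΔx j).le) (abs_nonneg _)
  have hi : Δt / Δx i * |a i| < 1 / 2 :=
    (Finset.single_le_sum (fun j _ => hterm_nonneg j) (Finset.mem_univ i)).trans_lt ha
  rw [div_mul_eq_mul_div, div_lt_iff₀ (hΔx i)] at hi
  rw [PiLp.smul_apply, smul_eq_mul, abs_mul, abs_of_nonneg hΔt]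
  linarith

end Cells

lemma sum_courant_lt_of_cfl {ι : Type*} [Fintype ι] {Δx : ι → ℝ} (hΔx : ∀ i, 0 < Δx i)
    {Δt : ℝ} (hΔt : 0 ≤ Δt) {winf : ℝ} (hCFL : winf * ∑ i, Δt / Δx i < 1 / 2) {a : ι → ℝ}
    (ha : ∀ i, |a i| ≤ winf) : ∑ i, Δt / Δx i * |a i| < 1 / 2 :=
  calc ∑ i, Δt / Δx i * |a i| ≤ ∑ i, Δt / Δx i * winf :=
        Finset.sum_le_sum fun i _ => mul_le_mul_of_nonneg_left (ha i) (div_nonneg hΔt (hΔx i).le)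
    _ = winf * ∑ i, Δt / Δx i := by rw [Finset.mul_sum]; simp only [mul_comm]
    _ < 1 / 2 := hCFL

section Weights

variable {d : ℕ} {Δx : Fin d → ℝ} {y : Euc d} {J : Fin d → ℤ}

lemma interpWeight_eq_of_mem_cell (hΔx : ∀ i, 0 < Δx i) (hy : y ∈ cell Δx J) (L : Fin d → ℤ) :
    interpWeight Δx L y =
      (if L = J then 1 - ∑ i, |y i - node Δx J i| / Δx i else 0)
        + ∑ i : Fin d,
          ((if L - Pi.single i 1 = J then pos (y i - node Δx J i) / Δx i else 0)
            + (if L + Pi.single i 1 = J then neg (y i - node Δx J i) / Δx i else 0)) := by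
  have hcell : ∀ K, y ∈ cell Δx K ↔ K = J :=
    fun K => ⟨fun hK => eq_of_mem_cell_of_mem_cell hΔx hK hy, fun h => h ▸ hy⟩
  simp only [interpWeight, hcell]
  refine congrArg₂ (· + ·) ?_ (Finset.sum_congr rfl fun i _ => ?_)
  · split_ifs with h <;> simp only [h]
  · congr 1 <;> split_ifs with h <;> simp only [h]

lemma interpWeight_self_of_mem_cell (hΔx : ∀ i, 0 < Δx i) (hy : y ∈ cell Δx J) :
    interpWeight Δx J y = 1 - ∑ i, |y i - node Δx J i| / Δx i := by
  simp [interpWeight_eq_of_mem_cell hΔx hy]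

lemma interpWeight_add_single_of_mem_cell (hΔx : ∀ i, 0 < Δx i) (hy : y ∈ cell Δx J)
    (i : Fin d) :
    interpWeight Δx (J + Pi.single i 1) y = pos (y i - node Δx J i) / Δx i := by
  simp [interpWeight_eq_of_mem_cell hΔx hy, add_single_one_sub_single_one_eq_self_iff,
    add_single_one_add_single_one_ne_self]

lemma interpWeight_sub_single_of_mem_cell (hΔx : ∀ i, 0 < Δx i) (hy : y ∈ cell Δx J)
    (i : Fin d) :
    interpWeight Δx (J - Pi.single i 1) y = neg (y i - node Δx J i) / Δx i := by
  simp [interpWeight_eq_of_mem_cell hΔx hy, sub_single_one_add_single_one_eq_self_iff,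
    sub_single_one_sub_single_one_ne_self]

lemma interpWeight_eq_zero_of_mem_cell (hΔx : ∀ i, 0 < Δx i) (hy : y ∈ cell Δx J)
    {L : Fin d → ℤ} (hLJ : L ≠ J)
    (hL : ∀ i, L ≠ J + Pi.single i 1 ∧ L ≠ J - Pi.single i 1) : interpWeight Δx L y = 0 := by
  rw [interpWeight_eq_of_mem_cell hΔx hy, if_neg hLJ, zero_add]
  refine Finset.sum_eq_zero fun i _ => ?_
  rw [if_neg fun h => (hL i).1 (eq_add_of_sub_eq h), if_neg fun h => (hL i).2 (eq_sub_of_add_eq h),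
    add_zero]

lemma interpWeight_nonneg_of_mem_cell (hΔx : ∀ i, 0 < Δx i) (hy : y ∈ cell Δx J)
    (hsum : ∑ i, |y i - node Δx J i| / Δx i ≤ 1) (L : Fin d → ℤ) : 0 ≤ interpWeight Δx L y := by
  rw [interpWeight_eq_of_mem_cell hΔx hy]
  refine add_nonneg ?_ (Finset.sum_nonneg fun i _ => add_nonneg ?_ ?_) <;> split_ifs
  all_goals first
    | rfl
    | linarith
    | exact div_nonneg (le_max_right _ _) (hΔx i).le

end Weights

theorem stmt11_general {d : ℕ} (Δx : Fin d → ℝ) (hΔx : ∀ i, 0 < Δx i)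
    (Δt : ℝ) (hΔt : 0 < Δt) (winf : ℝ)
    (hCFL : winf * ∑ i, Δt / Δx i < 1 / 2)
    (a : Euc d) (ha : ∀ i, |a i| ≤ winf) (J : Fin d → ℤ) :
    node Δx J + Δt • a ∈ cell Δx J ∧
    interpWeight Δx J (node Δx J + Δt • a) = 1 - ∑ i, (Δt / Δx i) * |a i| ∧
    (∀ i : Fin d, interpWeight Δx (J + Pi.single i 1) (node Δx J + Δt • a)
      = (Δt / Δx i) * pos (a i)) ∧
    (∀ i : Fin d, interpWeight Δx (J - Pi.single i 1) (node Δx J + Δt • a)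
      = (Δt / Δx i) * neg (a i)) ∧
    (∀ L : Fin d → ℤ, L ≠ J → (∀ i : Fin d, L ≠ J + Pi.single i 1 ∧ L ≠ J - Pi.single i 1) →
      interpWeight Δx L (node Δx J + Δt • a) = 0) ∧
    (∀ L : Fin d → ℤ, 0 ≤ interpWeight Δx L (node Δx J + Δt • a)) := by
  set y := node Δx J + Δt • a
  have hdisp : ∀ i, y i - node Δx J i = Δt * a i := fun i => by simp [y]
  have hcourant := sum_courant_lt_of_cfl hΔx hΔt.le hCFL ha
  have hy : y ∈ cell Δx J := node_add_smul_mem_cell hΔx hΔt.le hcourant J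
  have habs : ∀ i, |y i - node Δx J i| / Δx i = Δt / Δx i * |a i| := fun i => by
    rw [hdisp, abs_mul, abs_of_pos hΔt]; ring
  refine ⟨hy, ?_, fun i => ?_, fun i => ?_, fun L => interpWeight_eq_zero_of_mem_cell hΔx hy,
    interpWeight_nonneg_of_mem_cell hΔx hy (by simp only [habs]; linarith)⟩
  · simp only [interpWeight_self_of_mem_cell hΔx hy, habs]
  · rw [interpWeight_add_single_of_mem_cell hΔx hy, hdisp, pos_mul_of_nonneg hΔt.le]; ring
  · rw [interpWeight_sub_single_of_mem_cell hΔx hy, hdisp, neg_mul_of_nonneg hΔt.le]; ring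

/-- Under the strict 1/2-CFL condition, the point `x_J + Δt a` stays in the cell `C_J` and
the interpolation weights at `x_J + Δt a` are explicitly the upwind coefficients; in
particular they are nonnegative. -/
theorem stmt11 {d : ℕ} (hd : 1 ≤ d) (Δx : Fin d → ℝ) (hΔx : ∀ i, 0 < Δx i)
    (Δt : ℝ) (hΔt : 0 < Δt) (winf : ℝ) (hwinf : 0 ≤ winf)
    (hCFL : winf * ∑ i, Δt / Δx i < 1 / 2)
    (a : Euc d) (ha : ∀ i, |a i| ≤ winf) (J : Fin d → ℤ) :
    node Δx J + Δt • a ∈ cell Δx J ∧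
    interpWeight Δx J (node Δx J + Δt • a) = 1 - ∑ i, (Δt / Δx i) * |a i| ∧
    (∀ i : Fin d, interpWeight Δx (J + Pi.single i 1) (node Δx J + Δt • a)
      = (Δt / Δx i) * pos (a i)) ∧
    (∀ i : Fin d, interpWeight Δx (J - Pi.single i 1) (node Δx J + Δt • a)
      = (Δt / Δx i) * neg (a i)) ∧
    (∀ L : Fin d → ℤ, L ≠ J → (∀ i : Fin d, L ≠ J + Pi.single i 1 ∧ L ≠ J - Pi.single i 1) →
      interpWeight Δx L (node Δx J + Δt • a) = 0) ∧
    (∀ L : Fin d → ℤ, 0 ≤ interpWeight Δx L (node Δx J + Δt • a)) :=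
  stmt11_general Δx hΔx Δt hΔt winf hCFL a ha J
end
end
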